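/- arXiv:math/0609388 — 3 statements merged into one kernel-verified Lean document; each statement's English description precedes it below -/
import Mathlib

section
/- For two perfect forms A and B with the same arithmetical minimum and P ∈ GL_d(ℤ), one has B = ᵗP A P if and only if P⁻¹ maps Min(A) onto Min(B) (equivalently, Min(B) = P⁻¹ Min(A)). -/
open Matrix

noncomputable section

/-- The real vector associated to an integer vector. -/
def ivec {d : ℕ} (v : Fin d → ℤ) : Fin d → ℝ := fun i => (v i : ℝ)

/-- The value ᵗv A v of the quadratic form given by `A` at the integer vector `v`. -/
def qf {d : ℕ} (A : Matrix (Fin d) (Fin d) ℝ) (v : Fin d → ℤ) : ℝ :=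
  ivec v ⬝ᵥ A.mulVec (ivec v)

/-- The arithmetical minimum λ(A). -/
def lam {d : ℕ} (A : Matrix (Fin d) (Fin d) ℝ) : ℝ :=
  sInf {r : ℝ | ∃ v : Fin d → ℤ, v ≠ 0 ∧ qf A v = r}

/-- The set of shortest (minimal) vectors Min(A). -/
def MinVecs {d : ℕ} (A : Matrix (Fin d) (Fin d) ℝ) : Set (Fin d → ℤ) :=
  {v | v ≠ 0 ∧ qf A v = lam A}

/-- A positive definite symmetric matrix is perfect if it is uniquely determined among
symmetric matrices by the equations ᵗvBv = λ(A), v ∈ Min(A). -/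
def IsPerfect {d : ℕ} (A : Matrix (Fin d) (Fin d) ℝ) : Prop :=
  A.PosDef ∧ A.IsSymm ∧
    ∀ B : Matrix (Fin d) (Fin d) ℝ, B.IsSymm →
      (∀ v ∈ MinVecs A, qf B v = lam A) → B = A

end

/-! The change of variables `v ↦ P v` turns the form `ᵗP A P` into `A`, so `B = ᵗP A P`
forces `Min(B) = P⁻¹ Min(A)` once the minima agree (positive definiteness of `B` keeps
`P v ≠ 0`). Conversely, if `Min(B) = P⁻¹ Min(A)`, then the symmetric matrix `ᵗP A P` takes the
value `λ(B)` on every vector of `Min(B)`, and perfection of `B` forces `ᵗP A P = B`. -/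

variable {d : ℕ}

lemma ivec_zero : ivec (0 : Fin d → ℤ) = 0 :=
  funext fun _ => Int.cast_zero

lemma ivec_ne_zero {v : Fin d → ℤ} (hv : v ≠ 0) : ivec v ≠ 0 := fun h =>
  hv (funext fun i => by simpa [ivec] using congr_fun h i)

lemma ivec_mulVec (P : Matrix (Fin d) (Fin d) ℤ) (v : Fin d → ℤ) :
    ivec (P *ᵥ v) = P.map (Int.cast : ℤ → ℝ) *ᵥ ivec v := by
  funext i
  simp [ivec, mulVec, dotProduct]

lemma qf_zero (A : Matrix (Fin d) (Fin d) ℝ) : qf A 0 = 0 := by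
  rw [qf, ivec_zero, zero_dotProduct]

lemma qf_pos {A : Matrix (Fin d) (Fin d) ℝ} (hA : A.PosDef) {v : Fin d → ℤ} (hv : v ≠ 0) :
    0 < qf A v :=
  hA.dotProduct_mulVec_pos (ivec_ne_zero hv)

lemma qf_transpose_mul_mul_map (A : Matrix (Fin d) (Fin d) ℝ) (P : Matrix (Fin d) (Fin d) ℤ)
    (v : Fin d → ℤ) :
    qf ((P.map (Int.cast : ℤ → ℝ))ᵀ * A * P.map (Int.cast : ℤ → ℝ)) v = qf A (P *ᵥ v) := by
  rw [qf, qf, ivec_mulVec, mul_assoc, ← mulVec_mulVec, dotProduct_mulVec, vecMul_transpose,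
    ← mulVec_mulVec]

lemma Matrix.IsSymm.transpose_mul_mul {m n R : Type*} [Fintype m] [CommSemiring R]
    {A : Matrix m m R} (hA : A.IsSymm) (Q : Matrix m n R) : (Qᵀ * A * Q).IsSymm := by
  rw [IsSymm, transpose_mul, transpose_mul, transpose_transpose, hA.eq, Matrix.mul_assoc]

lemma minVecs_eq_preimage_of_eq_transpose_mul_mul {A B : Matrix (Fin d) (Fin d) ℝ}
    {P : Matrix (Fin d) (Fin d) ℤ} (hB : B.PosDef) (hlam : lam A = lam B)
    (h : B = (P.map (Int.cast : ℤ → ℝ))ᵀ * A * P.map (Int.cast : ℤ → ℝ)) :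
    MinVecs B = {v | P *ᵥ v ∈ MinVecs A} := by
  subst h
  ext v
  simp only [MinVecs, Set.mem_ofPred_eq, ← hlam, qf_transpose_mul_mul_map]
  constructor
  · rintro ⟨hv, hq⟩
    refine ⟨fun hPv => ?_, hq⟩
    have hpos := qf_pos hB hv
    rw [qf_transpose_mul_mul_map, hPv, qf_zero] at hpos
    exact hpos.false
  · rintro ⟨hPv, hq⟩
    exact ⟨fun hv => hPv (by rw [hv, mulVec_zero]), hq⟩

lemma eq_transpose_mul_mul_of_minVecs_eq_preimage {A B : Matrix (Fin d) (Fin d) ℝ}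
    {P : Matrix (Fin d) (Fin d) ℤ} (hA : A.IsSymm) (hB : IsPerfect B) (hlam : lam A = lam B)
    (hMin : MinVecs B = {v | P *ᵥ v ∈ MinVecs A}) :
    B = (P.map (Int.cast : ℤ → ℝ))ᵀ * A * P.map (Int.cast : ℤ → ℝ) := by
  refine (hB.2.2 _ (hA.transpose_mul_mul _) fun v hv => ?_).symm
  rw [hMin] at hv
  rw [qf_transpose_mul_mul_map, hv.2, hlam]

theorem equiv_iff_min_maps_general {d : ℕ} (A B : Matrix (Fin d) (Fin d) ℝ)
    (hA : IsPerfect A) (hB : IsPerfect B) (hlam : lam A = lam B)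
    (P : Matrix (Fin d) (Fin d) ℤ) :
    B = (P.map (Int.cast : ℤ → ℝ))ᵀ * A * P.map (Int.cast : ℤ → ℝ) ↔
      MinVecs B = {v : Fin d → ℤ | P.mulVec v ∈ MinVecs A} :=
  ⟨minVecs_eq_preimage_of_eq_transpose_mul_mul hB.1 hlam,
    eq_transpose_mul_mul_of_minVecs_eq_preimage hA.2.1 hB hlam⟩

/-- For perfect forms A, B with the same arithmetical minimum and P ∈ GL_d(ℤ),
B = ᵗP A P iff P⁻¹ maps Min(A) onto Min(B), i.e. Min(B) = {v | P v ∈ Min(A)}. -/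
theorem equiv_iff_min_maps {d : ℕ} (A B : Matrix (Fin d) (Fin d) ℝ)
    (hA : IsPerfect A) (hB : IsPerfect B) (hlam : lam A = lam B)
    (P : Matrix (Fin d) (Fin d) ℤ) (hP : IsUnit P.det) :
    B = (P.map (Int.cast : ℤ → ℝ))ᵀ * A * P.map (Int.cast : ℤ → ℝ) ↔
      MinVecs B = {v : Fin d → ℤ | P.mulVec v ∈ MinVecs A} :=
  equiv_iff_min_maps_general A B hA hB hlam P
end

section
/- Let (v_i)_{1≤i≤N} and (v'_i)_{1≤i≤N} be full-dimensional vector families in ℝ^m with edge weights c_{ij} = ᵗv_i Q⁻¹ v_j and c'_{ij} = ᵗv'_i Q'⁻¹ v'_j, where Q = Σ v_i·ᵗv_i and Q' = Σ v'_i·ᵗv'_i. If c_{ij} = c'_{ij} for all i, j, then there exists a unique invertible linear map A with A v_i = v'_i for all i. -/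
/-!
Stack the vectors as the rows of `V = of v` and `V' = of v'`, so that `Q' = V'ᵀ V'` and the
hypothesis on the edge weights reads `V Q⁻¹ Vᵀ = V' Q'⁻¹ V'ᵀ`. Then `A = V'ᵀ V Q⁻¹` works:
`A Vᵀ = V'ᵀ (V' Q'⁻¹ V'ᵀ) = Q' Q'⁻¹ V'ᵀ = V'ᵀ`, i.e. `A vᵢ = v'ᵢ`, where `Q'` is invertible
because `rank (V'ᵀ V') = rank V' = m`. For the same reason `A` has full rank, and it is unique
because `v` spans.
-/

open Matrix Submodule Set

namespace Matrix

variable {ι m n R K : Type*}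

section CommSemiring

variable [CommSemiring R]

theorem sum_vecMulVec_self_eq_transpose_mul_self [Fintype ι] (v : ι → n → R) :
    ∑ i, vecMulVec (v i) (v i) = (of v)ᵀ * of v := by
  ext a b
  simp only [sum_apply, vecMulVec_apply, mul_apply, transpose_apply, of_apply]

theorem of_mul_mul_transpose_apply [Fintype n] (v : ι → n → R) (M : Matrix n n R) (i j : ι) :
    (of v * M * (of v)ᵀ) i j = v i ⬝ᵥ M *ᵥ v j := by
  rw [dotProduct_mulVec, mul_apply]
  simp only [vecMul, dotProduct, mul_apply, of_apply, transpose_apply]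

theorem mul_transpose_of_eq_iff [Fintype n] (A : Matrix m n R) (v : ι → n → R) (w : ι → m → R) :
    A * (of v)ᵀ = (of w)ᵀ ↔ ∀ i, A *ᵥ v i = w i := by
  simp only [funext_iff, ← ext_iff, mul_apply, mulVec, dotProduct, transpose_apply, of_apply]
  exact forall_comm

theorem eq_of_mulVec_eq_of_span_eq_top [Fintype n] [DecidableEq n] {v : ι → n → R}
    (hv : span R (range v) = ⊤) {A B : Matrix m n R} (h : ∀ i, A *ᵥ v i = B *ᵥ v i) : A = B :=
  toLin'.injective <| LinearMap.ext_on hv <| forall_mem_range.2 h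

end CommSemiring

section Field

variable [Field K]

theorem rank_of_eq_card_of_span_eq_top [Fintype ι] [Fintype n] {v : ι → n → K}
    (hv : span K (range v) = ⊤) : (of v).rank = Fintype.card n := by
  rw [rank_eq_finrank_span_row, row]
  change Module.finrank K (span K (range v)) = _
  rw [hv, finrank_top, Module.finrank_fintype_fun_eq_card]

theorem isUnit_of_rank_eq_card [Fintype n] [DecidableEq n] {A : Matrix n n K}
    (h : A.rank = Fintype.card n) : IsUnit A :=
  mulVec_surjective_iff_isUnit.1 <| LinearMap.range_eq_top (f := A.mulVecLin).1 <|
    eq_top_of_finrank_eq <| h.trans (Module.finrank_fintype_fun_eq_card K).symm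

end Field

end Matrix

theorem restricted_isom_exists_unique_general {m N : ℕ}
    (v v' : Fin N → (Fin m → ℝ))
    (hv : Submodule.span ℝ (Set.range v) = ⊤)
    (hv' : Submodule.span ℝ (Set.range v') = ⊤)
    (Q Q' : Matrix (Fin m) (Fin m) ℝ)
    (hQ' : Q' = ∑ i, vecMulVec (v' i) (v' i))
    (hc : ∀ i j, v i ⬝ᵥ Q⁻¹.mulVec (v j) = v' i ⬝ᵥ Q'⁻¹.mulVec (v' j)) :
    ∃! A : Matrix (Fin m) (Fin m) ℝ, IsUnit A.det ∧ ∀ i, A.mulVec (v i) = v' i := by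
  set V := of v
  set V' := of v'
  have hrank : V'.rank = Fintype.card (Fin m) := rank_of_eq_card_of_span_eq_top hv'
  have hQ'_gram : Q' = V'ᵀ * V' := hQ'.trans (sum_vecMulVec_self_eq_transpose_mul_self v')
  have hQ'_det : IsUnit Q'.det := (isUnit_iff_isUnit_det Q').1 <| hQ'_gram ▸
    isUnit_of_rank_eq_card (by rw [rank_transpose_mul_self, hrank])
  have hweights : V * Q⁻¹ * Vᵀ = V' * Q'⁻¹ * V'ᵀ :=
    ext fun i j => (of_mul_mul_transpose_apply v _ i j).trans <|
      (hc i j).trans (of_mul_mul_transpose_apply v' _ i j).symm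
  have hA : V'ᵀ * V * Q⁻¹ * Vᵀ = V'ᵀ := calc
    V'ᵀ * V * Q⁻¹ * Vᵀ = V'ᵀ * (V' * Q'⁻¹ * V'ᵀ) := by rw [← hweights]; simp only [Matrix.mul_assoc]
    _ = Q' * Q'⁻¹ * V'ᵀ := by rw [hQ'_gram]; simp only [Matrix.mul_assoc]
    _ = V'ᵀ := by rw [mul_nonsing_inv _ hQ'_det, Matrix.one_mul]
  have hAv := (mul_transpose_of_eq_iff _ v v').1 hA
  refine ⟨V'ᵀ * V * Q⁻¹, ⟨?_, hAv⟩, ?_⟩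
  · refine (isUnit_iff_isUnit_det _).1 <| isUnit_of_rank_eq_card <|
      le_antisymm (rank_le_card_width _) ?_
    simpa only [hA, rank_transpose, hrank] using rank_mul_le_left (V'ᵀ * V * Q⁻¹) Vᵀ
  · rintro B ⟨-, hB⟩
    exact eq_of_mulVec_eq_of_span_eq_top hv fun i => by rw [hB, hAv]

/-- If two full-dimensional families have equal edge weights c_{ij} = ᵗv_i Q⁻¹ v_j,
then there is a unique invertible linear map A with A v_i = v'_i for all i. -/
theorem restricted_isom_exists_unique {m N : ℕ}
    (v v' : Fin N → (Fin m → ℝ))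
    (hv : Submodule.span ℝ (Set.range v) = ⊤)
    (hv' : Submodule.span ℝ (Set.range v') = ⊤)
    (Q Q' : Matrix (Fin m) (Fin m) ℝ)
    (hQ : Q = ∑ i, vecMulVec (v i) (v i))
    (hQ' : Q' = ∑ i, vecMulVec (v' i) (v' i))
    (hc : ∀ i j, v i ⬝ᵥ Q⁻¹.mulVec (v j) = v' i ⬝ᵥ Q'⁻¹.mulVec (v' j)) :
    ∃! A : Matrix (Fin m) (Fin m) ℝ, IsUnit A.det ∧ ∀ i, A.mulVec (v i) = v' i :=
  restricted_isom_exists_unique_general v v' hv hv' Q Q' hQ' hc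
end

section
/- If A is a positive definite d×d matrix and U a nonzero symmetric matrix with ᵗvUv = 0 for all v in some subset S of Min(A), then for all sufficiently small real t the matrix A + tU is positive definite and every v ∈ S satisfies ᵗv(A+tU)v = λ(A). -/
open Matrix

/-!
The form `(t, v) ↦ ᵗv (A + tU) v` is jointly continuous and positive at `t = 0` on the compact
unit sphere, hence positive on the sphere for all `t` near `0`; by homogeneity `A + tU` is then
positive definite. On `S` the form is unchanged, since `ᵗv (A + tU) v = ᵗv A v + t ᵗv U v`.
-/

open Filter Topology

namespace Matrix

variable {n : Type*} [Fintype n]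

theorem PosDef.of_dotProduct_mulVec_pos_on_sphere {M : Matrix n n ℝ} (hM : M.IsHermitian)
    (h : ∀ x ∈ Metric.sphere (0 : n → ℝ) 1, 0 < x ⬝ᵥ M *ᵥ x) : M.PosDef := by
  refine .of_dotProduct_mulVec_pos hM fun x hx => ?_
  have hx' : 0 < ‖x‖ := norm_pos_iff.2 hx
  have hy : ‖x‖⁻¹ • x ∈ Metric.sphere (0 : n → ℝ) 1 := by
    simp [norm_smul, hx'.ne']
  have hscale : x ⬝ᵥ M *ᵥ x = ‖x‖ ^ 2 * ((‖x‖⁻¹ • x) ⬝ᵥ M *ᵥ (‖x‖⁻¹ • x)) := by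
    simp only [mulVec_smul, dotProduct_smul, smul_dotProduct, smul_eq_mul]
    field_simp
  rw [star_trivial, hscale]
  exact mul_pos (by positivity) (h _ hy)

theorem eventually_posDef_of_continuous {X : Type*} [TopologicalSpace X]
    {M : X → Matrix n n ℝ} (hM : Continuous M) (hherm : ∀ x, (M x).IsHermitian) {x₀ : X}
    (h₀ : (M x₀).PosDef) : ∀ᶠ x in 𝓝 x₀, (M x).PosDef := by
  have hF : Continuous fun p : X × (n → ℝ) => p.2 ⬝ᵥ M p.1 *ᵥ p.2 :=
    continuous_snd.dotProduct ((hM.comp continuous_fst).matrix_mulVec continuous_snd)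
  have hsphere : ∀ᶠ x in 𝓝 x₀, ∀ v ∈ Metric.sphere (0 : n → ℝ) 1, 0 < v ⬝ᵥ M x *ᵥ v := by
    refine (isCompact_sphere 0 1).eventually_forall_of_forall_eventually fun v hv => ?_
    refine continuousAt_const.eventually_lt hF.continuousAt ?_
    simpa using h₀.dotProduct_mulVec_pos (ne_zero_of_mem_sphere one_ne_zero ⟨v, hv⟩)
  exact hsphere.mono fun x hx => .of_dotProduct_mulVec_pos_on_sphere (hherm x) hx

end Matrix

theorem qf_add_smul {d : ℕ} (A U : Matrix (Fin d) (Fin d) ℝ) (t : ℝ) (v : Fin d → ℤ) :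
    qf (A + t • U) v = qf A v + t * qf U v := by
  simp only [qf, add_mulVec, smul_mulVec, dotProduct_add, dotProduct_smul, smul_eq_mul]

theorem perturbation_keeps_min_general {d : ℕ} (A U : Matrix (Fin d) (Fin d) ℝ)
    (hA : A.PosDef) (hU : U.IsSymm)
    (S : Set (Fin d → ℤ)) (hS : S ⊆ MinVecs A)
    (hvan : ∀ v ∈ S, qf U v = 0) :
    ∃ ε > (0 : ℝ), ∀ t : ℝ, |t| < ε →
      (A + t • U).PosDef ∧ ∀ v ∈ S, qf (A + t • U) v = lam A := by
  have hherm (t : ℝ) : (A + t • U).IsHermitian :=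
    hA.isHermitian.add ((isHermitian_iff_isSymm.2 hU).smul (.all t))
  obtain ⟨ε, hε, hpos⟩ := Metric.eventually_nhds_iff.1 <|
    eventually_posDef_of_continuous (x₀ := 0) (by fun_prop) hherm (by simpa using hA)
  refine ⟨ε, hε, fun t ht => ⟨hpos (by simpa using ht), fun v hv => ?_⟩⟩
  rw [qf_add_smul, hvan v hv, (hS hv).2, mul_zero, add_zero]

/-- If U is a nonzero symmetric matrix vanishing on a subset S of Min(A), then for all
sufficiently small t the matrix A + tU is positive definite and every v ∈ S still has
value λ(A). -/
theorem perturbation_keeps_min {d : ℕ} (A U : Matrix (Fin d) (Fin d) ℝ)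
    (hA : A.PosDef) (hU : U.IsSymm) (hU0 : U ≠ 0)
    (S : Set (Fin d → ℤ)) (hS : S ⊆ MinVecs A)
    (hvan : ∀ v ∈ S, qf U v = 0) :
    ∃ ε > (0 : ℝ), ∀ t : ℝ, |t| < ε →
      (A + t • U).PosDef ∧ ∀ v ∈ S, qf (A + t • U) v = lam A :=
  perturbation_keeps_min_general A U hA hU S hS hvan
end
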